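/- Computing the expansion coefficients under simple spectrum (Corollary 2). (1) If the operator B₂ has N_B distinct eigenvalues, then for every Theorem-1 family the multiset {ζ̊_1, …, ζ̊_{N_B}} equals the set of eigenvalues of B₂, and for each 1 ≤ j ≤ N_B and every unit vector u ∈ H_B with B₂ u = ζ̊_j u one has ρ_j = (u, Ω u); thus the values ζ̊_j and ρ_j are uniquely determined by B₂ and Ω. (2) If the operator Ω₁ has N − N_B distinct eigenvalues, then for every Theorem-1 family the multiset {ρ_{N_B+1}, …, ρ_N} equals the set of eigenvalues of Ω₁, and for each N_B+1 ≤ j ≤ N and every unit vector u ∈ H_B^⊥ with Ω₁ u = ρ_j u one has d_j = (u, Θ* B₂⁻¹ Θ u); thus the values ρ_j and d_j are uniquely determined by Ω₁, Θ and B₂. -/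

import Mathlib

/-!
Both parts rest on one observation: the limit vectors `ẘ_j` form an orthonormal basis of `H`
whose high-loss members are eigenvectors of `B₂` with eigenvalues `ζ̊_j`, and whose low-loss
members are eigenvectors of `Ω₁` with eigenvalues `ρ_j`. The latter comes from the `β⁰` term of
`A(β) w_j(β) = ζ_j(β) w_j(β)`, which reads `Ω ẘ_j − i B w_j^{(−1)} = ρ_j ẘ_j`; projecting onto
`H_B` gives `P_B Ω ẘ_j = i B w_j^{(−1)}`. An eigenvector of `B₂` (resp. `Ω₁`) for an eigenvalue
missing from the list would be orthogonal to the whole basis, hence zero. When the spectrum is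
simple, a unit eigenvector `u` is a unimodular multiple `c ẘ_j`, so `(u, Ω u) = (ẘ_j, Ω ẘ_j)`, and
in part (2) `z := c i w_j^{(−1)}` satisfies `B z = P_B Ω u = B y`, whence
`(P_B Ω u, y) = (z, B y) = (z, B z) = d_j`.
-/

open Filter Asymptotics

noncomputable section

variable {H : Type*} [NormedAddCommGroup H] [InnerProductSpace ℂ H] [FiniteDimensional ℂ H]

/-- The system operator `A(β) = Ω − iβB`. -/
def sysOp (Ω B : H →L[ℂ] H) (β : ℝ) : H →L[ℂ] H :=
  Ω - (Complex.I * (β : ℂ)) • B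

/-- A *Theorem-1 family* for the system operator `A(β) = Ω − iβB` in the high-loss
regime: a threshold `β₀ > 0`; an orthonormal family `ẘ_j` whose first `N_B` members
are eigenvectors of `B` in the loss subspace `H_B = ran B` with positive eigenvalues
`ζ̊_j` and whose remaining members lie in the no-loss subspace `ker B`; vectors
`w_j^{(−1)}`; and eigenvalue/eigenvector branches `ζ_j(β)`, `w_j(β)` of `A(β)`
(forming a basis, so `A(β)` is diagonalizable for `β > β₀`) with the stated
asymptotic expansions as `β → ∞`, where `ρ_j = (ẘ_j, Ω ẘ_j)` and
`d_j = (w_j^{(−1)}, B w_j^{(−1)})`. -/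
structure Thm1Family (Ω B : H →L[ℂ] H) where
  β₀ : ℝ
  β₀_pos : 0 < β₀
  w0 : Fin (Module.finrank ℂ H) → H
  ζ0 : Fin (Module.finrank ℂ H) → ℝ
  wneg : Fin (Module.finrank ℂ H) → H
  ζ : Fin (Module.finrank ℂ H) → ℝ → ℂ
  w : Fin (Module.finrank ℂ H) → ℝ → H
  orth : Orthonormal ℂ w0
  ζ0_pos : ∀ j : Fin (Module.finrank ℂ H),
    (j : ℕ) < Module.finrank ℂ (LinearMap.range (B : H →ₗ[ℂ] H)) → 0 < ζ0 j
  eig0_high : ∀ j : Fin (Module.finrank ℂ H),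
    (j : ℕ) < Module.finrank ℂ (LinearMap.range (B : H →ₗ[ℂ] H)) → B (w0 j) = (ζ0 j : ℂ) • w0 j
  eig0_low : ∀ j : Fin (Module.finrank ℂ H),
    Module.finrank ℂ (LinearMap.range (B : H →ₗ[ℂ] H)) ≤ (j : ℕ) → B (w0 j) = 0
  eig : ∀ β : ℝ, β₀ < β → ∀ j, sysOp Ω B β (w j β) = ζ j β • w j β
  indep : ∀ β : ℝ, β₀ < β → LinearIndependent ℂ fun j => w j β
  ζ_high : ∀ j : Fin (Module.finrank ℂ H),
    (j : ℕ) < Module.finrank ℂ (LinearMap.range (B : H →ₗ[ℂ] H)) →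
      (fun β : ℝ => ζ j β - (-Complex.I * (ζ0 j : ℂ) * (β : ℂ)
          + ((inner ℂ (w0 j) (Ω (w0 j)) : ℂ).re : ℂ)))
        =O[atTop] fun β : ℝ => β⁻¹
  w_high : ∀ j : Fin (Module.finrank ℂ H),
    (j : ℕ) < Module.finrank ℂ (LinearMap.range (B : H →ₗ[ℂ] H)) →
      (fun β : ℝ => w j β - w0 j) =O[atTop] fun β : ℝ => β⁻¹
  ζ_low : ∀ j : Fin (Module.finrank ℂ H),
    Module.finrank ℂ (LinearMap.range (B : H →ₗ[ℂ] H)) ≤ (j : ℕ) →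
      (fun β : ℝ => ζ j β - (((inner ℂ (w0 j) (Ω (w0 j)) : ℂ).re : ℂ)
          - Complex.I * ((inner ℂ (wneg j) (B (wneg j)) : ℂ).re : ℂ) * (β : ℂ)⁻¹))
        =O[atTop] fun β : ℝ => (β ^ 2)⁻¹
  w_low : ∀ j : Fin (Module.finrank ℂ H),
    Module.finrank ℂ (LinearMap.range (B : H →ₗ[ℂ] H)) ≤ (j : ℕ) →
      (fun β : ℝ => w j β - (w0 j + ((β : ℂ))⁻¹ • wneg j)) =O[atTop] fun β : ℝ => (β ^ 2)⁻¹

/-- `ρ_j = (ẘ_j, Ω ẘ_j)`. -/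
def Thm1Family.ρ {Ω B : H →L[ℂ] H} (F : Thm1Family Ω B)
    (j : Fin (Module.finrank ℂ H)) : ℝ :=
  (inner ℂ (F.w0 j) (Ω (F.w0 j)) : ℂ).re

/-- `d_j = (w_j^{(−1)}, B w_j^{(−1)})`. -/
def Thm1Family.d {Ω B : H →L[ℂ] H} (F : Thm1Family Ω B)
    (j : Fin (Module.finrank ℂ H)) : ℝ :=
  (inner ℂ (F.wneg j) (B (F.wneg j)) : ℂ).re

open Module Submodule Topology

section InnerProduct

variable {𝕜 E : Type*} [RCLike 𝕜] [NormedAddCommGroup E] [InnerProductSpace 𝕜 E]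

theorem Orthonormal.eq_zero_of_forall_inner_eq_zero [FiniteDimensional 𝕜 E] {ι : Type*}
    [Fintype ι] {v : ι → E} (hv : Orthonormal 𝕜 v) (hcard : Fintype.card ι = finrank 𝕜 E)
    {x : E} (hx : ∀ i, inner 𝕜 (v i) x = 0) : x = 0 := by
  have hspan : span 𝕜 (Set.range v) = ⊤ :=
    hv.linearIndependent.span_eq_top_of_card_eq_finrank' hcard
  have hortho : span 𝕜 (Set.range v) ⟂ span 𝕜 {x} :=
    isOrtho_span.2 <| by
      rintro _ ⟨i, rfl⟩ _ rfl
      exact hx i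
  rwa [hspan, isOrtho_top_left, span_singleton_eq_bot] at hortho

theorem inner_map_smul_map_smul_of_norm_eq_one (L : E →L[𝕜] E) {c : 𝕜} (hc : ‖c‖ = 1) (x : E) :
    inner 𝕜 (c • x) (L (c • x)) = inner 𝕜 x (L x) := by
  rw [map_smul, inner_smul_left, inner_smul_right, ← mul_assoc, RCLike.conj_mul, hc]
  simp

theorem IsSelfAdjoint.inner_sub_orthogonalProjection_comm [CompleteSpace E] {T : E →L[𝕜] E}
    (hT : IsSelfAdjoint T) (K : Submodule 𝕜 E) [K.HasOrthogonalProjection] {x y : E}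
    (hx : x ∈ Kᗮ) (hy : y ∈ Kᗮ) :
    inner 𝕜 (T x - (K.orthogonalProjectionOnto (T x) : E)) y
      = inner 𝕜 x (T y - (K.orthogonalProjectionOnto (T y) : E)) := by
  rw [inner_sub_left, inner_sub_right, inner_right_of_mem_orthogonal (coe_mem _) hy,
    inner_left_of_mem_orthogonal (coe_mem _) hx, sub_zero, sub_zero]
  exact hT.isSymmetric x y

end InnerProduct

theorem LinearMap.mem_range_of_apply_eq_smul {K V : Type*} [Field K] [AddCommGroup V]
    [Module K V] (f : V →ₗ[K] V) {c : K} (hc : c ≠ 0) {x : V} (h : f x = c • x) :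
    x ∈ LinearMap.range f :=
  ⟨c⁻¹ • x, by rw [map_smul, h, smul_smul, inv_mul_cancel₀ hc, one_smul]⟩

section Spectrum

variable {E : Type*} [NormedAddCommGroup E] [InnerProductSpace ℂ E]

theorem inner_eq_zero_of_eigenvectors_of_ne {S : Set E} {T : E → E}
    (hT : ∀ x ∈ S, ∀ y ∈ S, inner ℂ (T x) y = inner ℂ x (T y)) {x y : E} (hx : x ∈ S)
    (hy : y ∈ S) {a b : ℝ} (hab : a ≠ b) (hTx : T x = (a : ℂ) • x) (hTy : T y = (b : ℂ) • y) :
    inner ℂ x y = 0 := by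
  have h := hT x hx y hy
  rw [hTx, hTy, inner_smul_left, inner_smul_right, Complex.conj_ofReal] at h
  have hab' : (a : ℂ) - b ≠ 0 := sub_ne_zero.2 (mod_cast hab)
  have : ((a : ℂ) - b) * inner ℂ x y = 0 := by rw [sub_mul, h, sub_self]
  exact (mul_eq_zero.1 this).resolve_left hab'

theorem exists_eigenvalue_eq_of_orthonormal [FiniteDimensional ℂ E] {ι : Type*} [Fintype ι]
    {v : ι → E} (hv : Orthonormal ℂ v) (hcard : Fintype.card ι = finrank ℂ E)
    {S : Submodule ℂ E} {T : E → E} (hT : ∀ x ∈ S, ∀ y ∈ S, inner ℂ (T x) y = inner ℂ x (T y))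
    (p : ι → Prop) (ev : ι → ℝ) (hv_mem : ∀ i, p i → v i ∈ S)
    (hv_eig : ∀ i, p i → T (v i) = (ev i : ℂ) • v i) (hv_orth : ∀ i, ¬p i → v i ∈ Sᗮ)
    {μ : ℝ} {x : E} (hxS : x ∈ S) (hx0 : x ≠ 0) (hTx : T x = (μ : ℂ) • x) :
    ∃ i, p i ∧ ev i = μ := by
  by_contra! hne
  refine hx0 (hv.eq_zero_of_forall_inner_eq_zero hcard fun i => ?_)
  by_cases hi : p i
  · exact inner_eq_zero_of_eigenvectors_of_ne hT (hv_mem i hi) hxS (hne i hi) (hv_eig i hi) hTx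
  · exact inner_left_of_mem_orthogonal hxS (hv_orth i hi)

theorem exists_norm_eq_one_smul_of_eigenvector {S : Submodule ℂ E} {T : E → E}
    (hsimple : ∀ x y : E, x ∈ S → y ∈ S → x ≠ 0 →
      ∀ μ : ℝ, T x = (μ : ℂ) • x → T y = (μ : ℂ) • y → ∃ c : ℂ, y = c • x)
    {μ : ℝ} {v u : E} (hv : v ∈ S) (hu : u ∈ S) (hv1 : ‖v‖ = 1) (hu1 : ‖u‖ = 1)
    (hTv : T v = (μ : ℂ) • v) (hTu : T u = (μ : ℂ) • u) : ∃ c : ℂ, ‖c‖ = 1 ∧ u = c • v := by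
  have hv0 : v ≠ 0 := by
    rintro rfl
    simp at hv1
  obtain ⟨c, rfl⟩ := hsimple v u hv hu hv0 μ hTv hTu
  refine ⟨c, ?_, rfl⟩
  rwa [norm_smul, hv1, mul_one] at hu1

end Spectrum

section Expansion

variable {E : Type*} [NormedAddCommGroup E] [NormedSpace ℂ E]

theorem tendsto_smul_sub_of_isBigO_inv_sq {f : ℝ → E} {a b : E}
    (hf : (fun β : ℝ => f β - (a + (β : ℂ)⁻¹ • b)) =O[atTop] fun β : ℝ => (β ^ 2)⁻¹) :
    Tendsto (fun β : ℝ => (β : ℂ) • (f β - a)) atTop (𝓝 b) := by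
  have hβ : (fun β : ℝ => (β : ℂ)) =O[atTop] fun β : ℝ => β := isBigO_of_le _ fun β => by simp
  have hrem : Tendsto (fun β : ℝ => (β : ℂ) • (f β - (a + (β : ℂ)⁻¹ • b))) atTop (𝓝 0) := by
    refine (hβ.smul hf).trans_tendsto (tendsto_inv_atTop_zero.congr' ?_)
    filter_upwards [eventually_ne_atTop 0] with β hβ
    rw [smul_eq_mul]
    field_simp
  have := hrem.add_const b
  rw [zero_add] at this
  refine this.congr' ?_
  filter_upwards [eventually_ne_atTop 0] with β hβ
  rw [smul_sub, smul_add, smul_smul, mul_inv_cancel₀ (mod_cast hβ), one_smul, smul_sub]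
  abel

theorem tendsto_of_isBigO_inv_sq {f : ℝ → E} {a b : E}
    (hf : (fun β : ℝ => f β - (a + (β : ℂ)⁻¹ • b)) =O[atTop] fun β : ℝ => (β ^ 2)⁻¹) :
    Tendsto f atTop (𝓝 a) := by
  have hinv : Tendsto (fun β : ℝ => (β : ℂ)⁻¹) atTop (𝓝 0) := by
    simpa [Function.comp_def] using
      (Complex.continuous_ofReal.tendsto 0).comp tendsto_inv_atTop_zero
  have := hinv.smul (tendsto_smul_sub_of_isBigO_inv_sq hf)
  rw [zero_smul] at this
  refine tendsto_sub_nhds_zero_iff.1 (this.congr' ?_)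
  filter_upwards [eventually_ne_atTop 0] with β hβ
  rw [smul_smul, inv_mul_cancel₀ (mod_cast hβ), one_smul]

theorem sub_I_smul_apply_eq_of_expansion {Ω B : E →L[ℂ] E} {w : ℝ → E} {ζ : ℝ → ℂ} {a b : E}
    {ρ : ℂ} (heig : ∀ᶠ β : ℝ in atTop, (Ω - (Complex.I * (β : ℂ)) • B) (w β) = ζ β • w β)
    (hw : (fun β : ℝ => w β - (a + (β : ℂ)⁻¹ • b)) =O[atTop] fun β : ℝ => (β ^ 2)⁻¹)
    (hζ : Tendsto ζ atTop (𝓝 ρ)) (hBa : B a = 0) :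
    Ω a - Complex.I • B b = ρ • a := by
  have hwa : Tendsto w atTop (𝓝 a) := tendsto_of_isBigO_inv_sq hw
  -- `B a = 0` removes the order-`β` term: `β • B (w β) = B (β • (w β - a)) → B b`.
  have hBw : Tendsto (fun β : ℝ => (β : ℂ) • B (w β)) atTop (𝓝 (B b)) := by
    refine ((B.continuous.tendsto b).comp (tendsto_smul_sub_of_isBigO_inv_sq hw)).congr
      fun β => ?_
    simp [hBa]
  have hlhs : Tendsto (fun β : ℝ => (Ω - (Complex.I * (β : ℂ)) • B) (w β)) atTop
      (𝓝 (Ω a - Complex.I • B b)) := by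
    refine (((Ω.continuous.tendsto a).comp hwa).sub (hBw.const_smul Complex.I)).congr
      fun β => ?_
    simp [mul_smul]
  exact tendsto_nhds_unique (hlhs.congr' heig) (hζ.smul hwa)

end Expansion

namespace Thm1Family

variable {V : Type*} [NormedAddCommGroup V] [InnerProductSpace ℂ V] {Ω B : V →L[ℂ] V}
  (F : Thm1Family Ω B) {j : Fin (finrank ℂ V)}

local notation "N_B" => finrank ℂ (LinearMap.range (B : V →ₗ[ℂ] V))

theorem apply_w0_sub_I_smul_apply_wneg (hj : N_B ≤ (j : ℕ)) :
    Ω (F.w0 j) - Complex.I • B (F.wneg j) = (F.ρ j : ℂ) • F.w0 j := by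
  have hζ : Tendsto (F.ζ j) atTop (𝓝 (F.ρ j : ℂ)) :=
    tendsto_of_isBigO_inv_sq (b := -(Complex.I * (F.d j : ℂ))) <|
      (F.ζ_low j hj).congr_left fun β => by
        rw [smul_eq_mul, ρ, d]
        ring
  exact sub_I_smul_apply_eq_of_expansion
    ((eventually_gt_atTop F.β₀).mono fun β hβ => F.eig β hβ j) (F.w_low j hj) hζ (F.eig0_low j hj)

theorem w0_mem_range (hj : (j : ℕ) < N_B) : F.w0 j ∈ LinearMap.range (B : V →ₗ[ℂ] V) :=
  LinearMap.mem_range_of_apply_eq_smul _ (Complex.ofReal_ne_zero.2 (F.ζ0_pos j hj).ne')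
    (F.eig0_high j hj)

variable [FiniteDimensional ℂ V]

theorem w0_mem_orthogonal_range (hB : IsSelfAdjoint B) (hj : N_B ≤ (j : ℕ)) :
    F.w0 j ∈ (LinearMap.range (B : V →ₗ[ℂ] V))ᗮ := by
  rw [hB.isSymmetric.orthogonal_range]
  exact F.eig0_low j hj

theorem w0_mem_orthogonal_ker (hB : IsSelfAdjoint B) (hj : (j : ℕ) < N_B) :
    F.w0 j ∈ (LinearMap.ker (B : V →ₗ[ℂ] V))ᗮ := by
  rw [← hB.isSymmetric.orthogonal_range, orthogonal_orthogonal]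
  exact F.w0_mem_range hj

theorem orthogonalProjection_apply_w0 (hB : IsSelfAdjoint B) (hj : N_B ≤ (j : ℕ)) :
    ((LinearMap.range (B : V →ₗ[ℂ] V)).orthogonalProjectionOnto (Ω (F.w0 j)) : V)
      = Complex.I • B (F.wneg j) := by
  have hΩw0 : Ω (F.w0 j) = (F.ρ j : ℂ) • F.w0 j + Complex.I • B (F.wneg j) := by
    rw [← F.apply_w0_sub_I_smul_apply_wneg hj, sub_add_cancel]
  rw [hΩw0, map_add, map_smul, map_smul,
    orthogonalProjectionOnto_apply_of_mem_orthogonal (F.w0_mem_orthogonal_range hB hj)]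
  simp [starProjection_eq_self_iff]

theorem compression_apply_w0 (hB : IsSelfAdjoint B) (hj : N_B ≤ (j : ℕ)) :
    Ω (F.w0 j) - ((LinearMap.range (B : V →ₗ[ℂ] V)).orthogonalProjectionOnto (Ω (F.w0 j)) : V)
      = (F.ρ j : ℂ) • F.w0 j := by
  rw [F.orthogonalProjection_apply_w0 hB hj, F.apply_w0_sub_I_smul_apply_wneg hj]

theorem d_eq_inner_orthogonalProjection (hB : IsSelfAdjoint B) (hj : N_B ≤ (j : ℕ)) {c : ℂ}
    (hc : ‖c‖ = 1) {y : V}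
    (hy : B y = ((LinearMap.range (B : V →ₗ[ℂ] V)).orthogonalProjectionOnto (Ω (c • F.w0 j)) : V)) :
    (F.d j : ℂ) = inner ℂ
      (((LinearMap.range (B : V →ₗ[ℂ] V)).orthogonalProjectionOnto (Ω (c • F.w0 j)) : V)) y := by
  set z := (c * Complex.I) • F.wneg j
  have hPΩ : ((LinearMap.range (B : V →ₗ[ℂ] V)).orthogonalProjectionOnto (Ω (c • F.w0 j)) : V)
      = B z := by
    rw [map_smul, map_smul, coe_smul, F.orthogonalProjection_apply_w0 hB hj, map_smul, smul_smul]
  have hz : ‖c * Complex.I‖ = 1 := by simp [hc]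
  calc (F.d j : ℂ)
      = inner ℂ (F.wneg j) (B (F.wneg j)) := hB.isSymmetric.coe_re_inner_self_apply (F.wneg j)
    _ = inner ℂ z (B z) := (inner_map_smul_map_smul_of_norm_eq_one B hz _).symm
    _ = inner ℂ z (B y) := by rw [hy, hPΩ]
    _ = inner ℂ (B z) y := (hB.isSymmetric z y).symm
    _ = _ := by rw [hPΩ]

end Thm1Family

theorem statement6_general
    (Ω B : H →L[ℂ] H) (hΩ : IsSelfAdjoint Ω) (hB : IsSelfAdjoint B) :
    ((∀ x y : H, x ∈ LinearMap.range (B : H →ₗ[ℂ] H) → y ∈ LinearMap.range (B : H →ₗ[ℂ] H) → x ≠ 0 →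
        ∀ μ : ℝ, B x = (μ : ℂ) • x → B y = (μ : ℂ) • y → ∃ c : ℂ, y = c • x) →
      ∀ F : Thm1Family Ω B,
        (∀ μ : ℝ, (∃ x : H, x ∈ LinearMap.range (B : H →ₗ[ℂ] H) ∧ x ≠ 0 ∧ B x = (μ : ℂ) • x) →
          ∃ j : Fin (Module.finrank ℂ H),
            (j : ℕ) < Module.finrank ℂ (LinearMap.range (B : H →ₗ[ℂ] H)) ∧ F.ζ0 j = μ) ∧
        (∀ j : Fin (Module.finrank ℂ H),
          (j : ℕ) < Module.finrank ℂ (LinearMap.range (B : H →ₗ[ℂ] H)) →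
          ∀ u : H, u ∈ LinearMap.range (B : H →ₗ[ℂ] H) → ‖u‖ = 1 → B u = (F.ζ0 j : ℂ) • u →
            F.ρ j = (inner ℂ u (Ω u) : ℂ).re)) ∧
    ((∀ x y : H, B x = 0 → B y = 0 → x ≠ 0 →
        ∀ μ : ℝ,
          Ω x - ((LinearMap.range (B : H →ₗ[ℂ] H)).orthogonalProjectionOnto (Ω x) : H) = (μ : ℂ) • x →
          Ω y - ((LinearMap.range (B : H →ₗ[ℂ] H)).orthogonalProjectionOnto (Ω y) : H) = (μ : ℂ) • y →
          ∃ c : ℂ, y = c • x) →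
      ∀ F : Thm1Family Ω B,
        (∀ μ : ℝ,
          (∃ x : H, B x = 0 ∧ x ≠ 0 ∧
            Ω x - ((LinearMap.range (B : H →ₗ[ℂ] H)).orthogonalProjectionOnto (Ω x) : H) = (μ : ℂ) • x) →
          ∃ j : Fin (Module.finrank ℂ H),
            Module.finrank ℂ (LinearMap.range (B : H →ₗ[ℂ] H)) ≤ (j : ℕ) ∧ F.ρ j = μ) ∧
        (∀ j : Fin (Module.finrank ℂ H),
          Module.finrank ℂ (LinearMap.range (B : H →ₗ[ℂ] H)) ≤ (j : ℕ) →
          ∀ u : H, B u = 0 → ‖u‖ = 1 →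
            Ω u - ((LinearMap.range (B : H →ₗ[ℂ] H)).orthogonalProjectionOnto (Ω u) : H) = (F.ρ j : ℂ) • u →
            ∀ y : H, y ∈ LinearMap.range (B : H →ₗ[ℂ] H) →
              B y = ((LinearMap.range (B : H →ₗ[ℂ] H)).orthogonalProjectionOnto (Ω u) : H) →
              (F.d j : ℂ)
                = inner ℂ (((LinearMap.range (B : H →ₗ[ℂ] H)).orthogonalProjectionOnto (Ω u) : H)) y)) := by
  have hcard : Fintype.card (Fin (finrank ℂ H)) = finrank ℂ H := Fintype.card_fin _
  let Ω₁ : H → H := fun x =>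
    Ω x - ((LinearMap.range (B : H →ₗ[ℂ] H)).orthogonalProjectionOnto (Ω x) : H)
  refine ⟨fun hsimple F => ⟨?_, ?_⟩, fun hsimple F => ⟨?_, ?_⟩⟩
  · rintro μ ⟨x, hxB, hx0, hBx⟩
    exact exists_eigenvalue_eq_of_orthonormal F.orth hcard (fun x _ y _ => hB.isSymmetric x y)
      _ F.ζ0 (fun j hj => F.w0_mem_range hj) F.eig0_high
      (fun j hj => F.w0_mem_orthogonal_range hB (not_lt.1 hj)) hxB hx0 hBx
  · intro j hj u huB hu1 hBu
    obtain ⟨c, hc, rfl⟩ := exists_norm_eq_one_smul_of_eigenvector hsimple (F.w0_mem_range hj) huB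
      (F.orth.1 j) hu1 (F.eig0_high j hj) hBu
    rw [inner_map_smul_map_smul_of_norm_eq_one Ω hc]
    rfl
  · rintro μ ⟨x, hBx, hx0, hΩx⟩
    refine exists_eigenvalue_eq_of_orthonormal (T := Ω₁) F.orth hcard ?_ _ F.ρ F.eig0_low
      (fun j hj => F.compression_apply_w0 hB hj)
      (fun j hj => F.w0_mem_orthogonal_ker hB (not_le.1 hj)) hBx hx0 hΩx
    rw [← hB.isSymmetric.orthogonal_range]
    exact fun x hx y hy => hΩ.inner_sub_orthogonalProjection_comm _ hx hy
  · intro j hj u hBu hu1 hΩu y _ hBy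
    obtain ⟨c, hc, rfl⟩ := exists_norm_eq_one_smul_of_eigenvector (T := Ω₁)
      (S := LinearMap.ker (B : H →ₗ[ℂ] H)) hsimple (F.eig0_low j hj) hBu (F.orth.1 j) hu1
      (F.compression_apply_w0 hB hj) hΩu
    exact F.d_eq_inner_orthogonalProjection hB hj hc hBy

/-- **Corollary 2: computing the expansion coefficients under a
simple spectrum.**
(1) If every eigenspace of `B₂` (the compression of `B` to `H_B = ran B`) is
one-dimensional — i.e. `B₂` has `N_B` distinct eigenvalues — then for every
Theorem-1 family: every eigenvalue of `B₂` occurs among the high-loss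
coefficients `ζ̊_j`, and for each high-loss `j` and every unit eigenvector
`u ∈ H_B` with `B u = ζ̊_j u` one has `ρ_j = (u, Ω u)`.
(2) If every eigenspace of `Ω₁` (the compression of `Ω` to `ker B`, i.e.
`x ↦ Ω x − P_B Ω x`) is one-dimensional, then for every Theorem-1 family:
every eigenvalue of `Ω₁` occurs among the low-loss coefficients `ρ_j`, and for
each low-loss `j` and every unit eigenvector `u ∈ ker B` of `Ω₁` with
eigenvalue `ρ_j` one has `d_j = (u, Θ* B₂⁻¹ Θ u)`, the latter expressed via the
unique `y ∈ ran B` with `B y = P_B Ω u` as `d_j = (P_B Ω u, y)`. -/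
theorem statement6
    (Ω B : H →L[ℂ] H) (hΩ : IsSelfAdjoint Ω) (hB : IsSelfAdjoint B)
    (hBpos : ∀ x : H, 0 ≤ (inner ℂ x (B x) : ℂ).re)
    (hNB_pos : 0 < Module.finrank ℂ (LinearMap.range (B : H →ₗ[ℂ] H)))
    (hNB_lt : Module.finrank ℂ (LinearMap.range (B : H →ₗ[ℂ] H)) < Module.finrank ℂ H) :
    ((∀ x y : H, x ∈ LinearMap.range (B : H →ₗ[ℂ] H) → y ∈ LinearMap.range (B : H →ₗ[ℂ] H) → x ≠ 0 →
        ∀ μ : ℝ, B x = (μ : ℂ) • x → B y = (μ : ℂ) • y → ∃ c : ℂ, y = c • x) →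
      ∀ F : Thm1Family Ω B,
        (∀ μ : ℝ, (∃ x : H, x ∈ LinearMap.range (B : H →ₗ[ℂ] H) ∧ x ≠ 0 ∧ B x = (μ : ℂ) • x) →
          ∃ j : Fin (Module.finrank ℂ H),
            (j : ℕ) < Module.finrank ℂ (LinearMap.range (B : H →ₗ[ℂ] H)) ∧ F.ζ0 j = μ) ∧
        (∀ j : Fin (Module.finrank ℂ H),
          (j : ℕ) < Module.finrank ℂ (LinearMap.range (B : H →ₗ[ℂ] H)) →
          ∀ u : H, u ∈ LinearMap.range (B : H →ₗ[ℂ] H) → ‖u‖ = 1 → B u = (F.ζ0 j : ℂ) • u →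
            F.ρ j = (inner ℂ u (Ω u) : ℂ).re)) ∧
    ((∀ x y : H, B x = 0 → B y = 0 → x ≠ 0 →
        ∀ μ : ℝ,
          Ω x - ((LinearMap.range (B : H →ₗ[ℂ] H)).orthogonalProjectionOnto (Ω x) : H) = (μ : ℂ) • x →
          Ω y - ((LinearMap.range (B : H →ₗ[ℂ] H)).orthogonalProjectionOnto (Ω y) : H) = (μ : ℂ) • y →
          ∃ c : ℂ, y = c • x) →
      ∀ F : Thm1Family Ω B,
        (∀ μ : ℝ,
          (∃ x : H, B x = 0 ∧ x ≠ 0 ∧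
            Ω x - ((LinearMap.range (B : H →ₗ[ℂ] H)).orthogonalProjectionOnto (Ω x) : H) = (μ : ℂ) • x) →
          ∃ j : Fin (Module.finrank ℂ H),
            Module.finrank ℂ (LinearMap.range (B : H →ₗ[ℂ] H)) ≤ (j : ℕ) ∧ F.ρ j = μ) ∧
        (∀ j : Fin (Module.finrank ℂ H),
          Module.finrank ℂ (LinearMap.range (B : H →ₗ[ℂ] H)) ≤ (j : ℕ) →
          ∀ u : H, B u = 0 → ‖u‖ = 1 →
            Ω u - ((LinearMap.range (B : H →ₗ[ℂ] H)).orthogonalProjectionOnto (Ω u) : H) = (F.ρ j : ℂ) • u →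
            ∀ y : H, y ∈ LinearMap.range (B : H →ₗ[ℂ] H) →
              B y = ((LinearMap.range (B : H →ₗ[ℂ] H)).orthogonalProjectionOnto (Ω u) : H) →
              (F.d j : ℂ)
                = inner ℂ (((LinearMap.range (B : H →ₗ[ℂ] H)).orthogonalProjectionOnto (Ω u) : H)) y)) :=
  statement6_general Ω B hΩ hB
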